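/- arXiv:1307.1949 — 6 statements merged into one kernel-verified Lean document; each statement's English description precedes it below -/
import Mathlib

section
/- For a dictionary Φ ∈ ℝ^{n×d} with unit-norm columns and any k ≥ 1, the mutual coherence M, global 2-coherence ν_k, and restricted isometry constant δ_{k+1} satisfy M ≤ ν_k ≤ δ_{k+1} ≤ √k · ν_k ≤ k·M. -/
/-!
`M ≤ ν_k` and `√k ν_k ≤ k M` are immediate: take `Λ = {j}`, resp. bound each of the at most `k`
terms of `ν_k²` by `M²`. For `ν_k ≤ δ_{k+1}`, polarization turns the two RIP inequalities for
`u ± w` into `⟨Φu, Φw⟩ ≤ δ` whenever `u, w` are orthonormal with joint support of size `≤ k + 1`;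
take `u = e_i` and `w` proportional to `(⟨φ_i, φ_j⟩)_{j ∈ Λ}`, so that `⟨Φu, Φw⟩ = ν_k`.
For `δ_{k+1} ≤ √k ν_k`, write `‖Φv‖² - ‖v‖² = ∑_i v_i ∑_{j ≠ i} v_j ⟨φ_i, φ_j⟩` over the support
`S` of `v`, bound each inner sum by `ν_k √(‖v‖² - v_i²)` (Cauchy–Schwarz), and use Cauchy–Schwarz
once more: `∑_i |v_i| √(‖v‖² - v_i²) ≤ √(|S| - 1) ‖v‖²`.
-/

open Finset
open scoped Matrix

lemma abs_sum_mul_le_sqrt_mul_sqrt {ι : Type*} (s : Finset ι) (f g : ι → ℝ) :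
    |∑ i ∈ s, f i * g i| ≤ √(∑ i ∈ s, f i ^ 2) * √(∑ i ∈ s, g i ^ 2) := by
  rw [← Real.sqrt_mul (sum_nonneg fun i _ => sq_nonneg _)]
  exact Real.abs_le_sqrt (sum_mul_sq_le_sq_mul_sq s f g)

lemma sqrt_sum_sq_le_sqrt_card_mul {ι : Type*} {s : Finset ι} {f : ι → ℝ} {c : ℝ}
    (hc : 0 ≤ c) (hf : ∀ i ∈ s, |f i| ≤ c) : √(∑ i ∈ s, f i ^ 2) ≤ √(#s : ℝ) * c := by
  rw [← Real.sqrt_sq hc, ← Real.sqrt_mul (Nat.cast_nonneg _)]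
  refine Real.sqrt_le_sqrt ?_
  rw [← nsmul_eq_mul]
  exact sum_le_card_nsmul _ _ _ fun i hi => sq_le_sq' (abs_le.1 (hf i hi)).1 (abs_le.1 (hf i hi)).2

lemma sum_abs_mul_sqrt_sub_sq_le {ι : Type*} (s : Finset ι) (v : ι → ℝ) :
    ∑ i ∈ s, |v i| * √(∑ j ∈ s, v j ^ 2 - v i ^ 2) ≤ √(#s - 1 : ℝ) * ∑ j ∈ s, v j ^ 2 := by
  set T := ∑ j ∈ s, v j ^ 2
  have hT : 0 ≤ T := sum_nonneg fun j _ => sq_nonneg _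
  have hrest : ∑ i ∈ s, √(T - v i ^ 2) ^ 2 = (#s - 1) * T := by
    rw [sum_congr rfl fun i hi => Real.sq_sqrt (sub_nonneg.2
      (single_le_sum (f := fun j => v j ^ 2) (fun j _ => sq_nonneg _) hi)),
      sum_sub_distrib, sum_const, nsmul_eq_mul]
    ring
  calc ∑ i ∈ s, |v i| * √(T - v i ^ 2)
      ≤ √(∑ i ∈ s, |v i| ^ 2) * √(∑ i ∈ s, √(T - v i ^ 2) ^ 2) :=
        Real.sum_mul_le_sqrt_mul_sqrt _ _ _
    _ = √(#s - 1 : ℝ) * T := by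
        simp only [sq_abs, hrest]
        rw [Real.sqrt_mul' _ hT, mul_left_comm, Real.mul_self_sqrt hT]

lemma ncard_setOf_ne_zero_le {ι M : Type*} [Zero M] {v : ι → M} {S : Finset ι}
    (hv : ∀ i ∉ S, v i = 0) : {i | v i ≠ 0}.ncard ≤ #S := by
  rw [← Set.ncard_coe_finset]
  exact Set.ncard_le_ncard (fun i hi => by_contra fun h => hi (hv i h)) S.finite_toSet

section Dictionary

variable {m ι : Type*} [Fintype m] [Fintype ι]

def IsRIPConst (Φ : Matrix m ι ℝ) (s : ℕ) (x : ℝ) : Prop :=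
  ∀ v : ι → ℝ, ({i | v i ≠ 0} : Set ι).ncard ≤ s →
    (1 - x) * ∑ i, v i ^ 2 ≤ ∑ r, (∑ i, Φ r i * v i) ^ 2 ∧
      ∑ r, (∑ i, Φ r i * v i) ^ 2 ≤ (1 + x) * ∑ i, v i ^ 2

lemma sum_mul_sum_eq_sum_sum_gram (Φ : Matrix m ι ℝ) (u w : ι → ℝ) :
    ∑ r, (∑ i, Φ r i * u i) * (∑ j, Φ r j * w j) = ∑ i, ∑ j, u i * w j * (Φᵀ * Φ) i j := by
  simp_rw [Matrix.mul_apply, Matrix.transpose_apply, sum_mul_sum, mul_sum]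
  rw [sum_comm]
  refine sum_congr rfl fun i _ => ?_
  rw [sum_comm]
  exact sum_congr rfl fun j _ => sum_congr rfl fun r _ => by ring

lemma sum_sq_sum_mul_sub_sum_sq_eq [DecidableEq ι] (Φ : Matrix m ι ℝ)
    (hcol : ∀ i, ∑ r, Φ r i ^ 2 = 1) {v : ι → ℝ} {S : Finset ι} (hv : ∀ i ∉ S, v i = 0) :
    ∑ r, (∑ i, Φ r i * v i) ^ 2 - ∑ i, v i ^ 2 =
      ∑ i ∈ S, v i * ∑ j ∈ S.erase i, v j * (Φᵀ * Φ) i j := by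
  have hrestrict : ∀ f : ι → ℝ, (∀ i ∉ S, f i = 0) → ∑ i, f i = ∑ i ∈ S, f i := fun f hf =>
    (sum_subset (subset_univ S) fun i _ hi => hf i hi).symm
  simp_rw [sq, sum_mul_sum_eq_sum_sum_gram]
  rw [hrestrict _ fun i hi => by simp [hv i hi], hrestrict _ fun i hi => by simp [hv i hi],
    ← sum_sub_distrib]
  refine sum_congr rfl fun i hi => ?_
  have hdiag : (Φᵀ * Φ) i i = 1 := by simpa [Matrix.mul_apply, sq] using hcol i
  rw [hrestrict _ fun j hj => by simp [hv j hj], ← add_sum_erase _ _ hi, hdiag, mul_sum]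
  simp only [mul_assoc]
  ring

namespace IsRIPConst

variable {Φ : Matrix m ι ℝ} {s : ℕ} {x : ℝ}

lemma nonneg [Nonempty ι] (h : IsRIPConst Φ s x) (hs : 1 ≤ s) : 0 ≤ x := by
  classical
  obtain ⟨i⟩ := ‹Nonempty ι›
  have hsupp : ({j | Pi.single i (1 : ℝ) j ≠ 0} : Set ι).ncard ≤ s :=
    (ncard_setOf_ne_zero_le (S := {i}) fun j hj => by simp_all).trans (by simpa using hs)
  have := h (Pi.single i 1) hsupp
  simp only [Pi.single_apply, ite_pow, one_pow, zero_pow two_ne_zero, sum_ite_eq', mem_univ,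
    if_true] at this
  linarith [this.1, this.2]

lemma two_mul_sum_mul_sum_le (h : IsRIPConst Φ s x) {u w : ι → ℝ} {S : Finset ι} (hS : #S ≤ s)
    (hu : ∀ i ∉ S, u i = 0) (hw : ∀ i ∉ S, w i = 0) (horth : ∑ i, u i * w i = 0) :
    2 * ∑ r, (∑ i, Φ r i * u i) * (∑ i, Φ r i * w i) ≤ x * (∑ i, u i ^ 2 + ∑ i, w i ^ 2) := by
  have hplus := (h (u + w) ((ncard_setOf_ne_zero_le fun i hi => by
    simp [hu i hi, hw i hi]).trans hS)).2
  have hminus := (h (u - w) ((ncard_setOf_ne_zero_le fun i hi => by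
    simp [hu i hi, hw i hi]).trans hS)).1
  simp only [Pi.add_apply, Pi.sub_apply, mul_add, mul_sub, sum_add_distrib, sum_sub_distrib,
    add_sq, sub_sq, mul_assoc, ← mul_sum, horth] at hplus hminus
  linarith

lemma sqrt_sum_sq_gram_le {k : ℕ} (h : IsRIPConst Φ (k + 1) x) {i : ι} {Λ : Finset ι}
    (hi : i ∉ Λ) (hΛ : #Λ ≤ k) : √(∑ j ∈ Λ, (Φᵀ * Φ) i j ^ 2) ≤ x := by
  classical
  have : Nonempty ι := ⟨i⟩
  set ν := √(∑ j ∈ Λ, (Φᵀ * Φ) i j ^ 2)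
  have hν_sq : ν ^ 2 = ∑ j ∈ Λ, (Φᵀ * Φ) i j ^ 2 := Real.sq_sqrt (sum_nonneg fun j _ => sq_nonneg _)
  rcases (show 0 ≤ ν from Real.sqrt_nonneg _).eq_or_lt with hν_zero | hν_pos
  · rw [← hν_zero]
    exact h.nonneg (by omega)
  let u : ι → ℝ := Pi.single i 1
  let w : ι → ℝ := fun j => if j ∈ Λ then (Φᵀ * Φ) i j / ν else 0
  have hw : ∀ f : ι → ℝ, ∑ j, w j * f j = ∑ j ∈ Λ, (Φᵀ * Φ) i j / ν * f j := by
    intro f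
    simp only [w, ite_mul, zero_mul, sum_ite_mem, univ_inter]
  have hw_sq : ∑ j, w j ^ 2 = 1 := by
    simp only [w, ite_pow, div_pow, zero_pow two_ne_zero, sum_ite_mem, univ_inter, ← sum_div,
      ← hν_sq]
    exact div_self (pow_pos hν_pos 2).ne'
  have hu_sq : ∑ j, u j ^ 2 = 1 := by simp [u, Pi.single_apply]
  have hinner : ∑ r, (∑ j, Φ r j * u j) * (∑ j, Φ r j * w j) = ν := by
    rw [sum_mul_sum_eq_sum_sum_gram]
    simp only [u, Pi.single_apply, ite_mul, one_mul, zero_mul, sum_ite_irrel, sum_const_zero,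
      sum_ite_eq', mem_univ, if_true, hw, div_mul_eq_mul_div, ← sq, ← sum_div, ← hν_sq]
    field_simp
  have key := h.two_mul_sum_mul_sum_le (u := u) (w := w) (S := insert i Λ)
    ((card_insert_le _ _).trans (by omega)) (fun j hj => by simp_all [u, Pi.single_apply])
    (fun j hj => by simp_all [w]) (by simp [u, Pi.single_apply, w, hi])
  rw [hinner, hu_sq, hw_sq] at key
  linarith

end IsRIPConst

theorem isRIPConst_sqrt_mul_of_sqrt_sum_sq_gram_le {Φ : Matrix m ι ℝ} {k : ℕ} {ν : ℝ}
    (hcol : ∀ i, ∑ r, Φ r i ^ 2 = 1) (hν_nonneg : 0 ≤ ν)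
    (hν : ∀ i Λ, i ∉ Λ → #Λ ≤ k → √(∑ j ∈ Λ, (Φᵀ * Φ) i j ^ 2) ≤ ν) :
    IsRIPConst Φ (k + 1) (√k * ν) := by
  classical
  intro v hv
  set S := (Set.toFinite {i | v i ≠ 0}).toFinset
  have hvS : ∀ i ∉ S, v i = 0 := by simp [S]
  have hS : #S ≤ k + 1 := by rwa [Set.ncard_eq_toFinset_card _ (Set.toFinite _)] at hv
  set T := ∑ i ∈ S, v i ^ 2
  have hT : ∑ i, v i ^ 2 = T := (sum_subset (subset_univ S) fun i _ hi => by simp [hvS i hi]).symm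
  have hrow : ∀ i ∈ S, |∑ j ∈ S.erase i, v j * (Φᵀ * Φ) i j| ≤ √(T - v i ^ 2) * ν := by
    intro i hi
    calc _ ≤ √(∑ j ∈ S.erase i, v j ^ 2) * √(∑ j ∈ S.erase i, (Φᵀ * Φ) i j ^ 2) :=
          abs_sum_mul_le_sqrt_mul_sqrt _ _ _
      _ ≤ √(T - v i ^ 2) * ν := by
        rw [sum_erase_eq_sub hi]
        gcongr
        exact hν i _ (notMem_erase i S) (by rw [card_erase_of_mem hi]; omega)
  have hdev : |∑ r, (∑ i, Φ r i * v i) ^ 2 - ∑ i, v i ^ 2| ≤ √k * ν * ∑ i, v i ^ 2 := by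
    rw [sum_sq_sum_mul_sub_sum_sq_eq Φ hcol hvS, hT]
    calc _ ≤ ∑ i ∈ S, |v i| * (√(T - v i ^ 2) * ν) :=
          (abs_sum_le_sum_abs _ _).trans (sum_le_sum fun i hi => by
            rw [abs_mul]; gcongr; exact hrow i hi)
      _ = ν * ∑ i ∈ S, |v i| * √(T - v i ^ 2) := by
          rw [mul_sum]; exact sum_congr rfl fun i _ => by ring
      _ ≤ ν * (√(#S - 1 : ℝ) * T) := by gcongr; exact sum_abs_mul_sqrt_sub_sq_le S v
      _ ≤ √k * ν * T := by
          rw [mul_comm (√(k : ℝ)) ν, mul_assoc]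
          gcongr
          linarith [(Nat.cast_le (α := ℝ)).2 hS, Nat.cast_succ (R := ℝ) k]
  rw [abs_le] at hdev
  constructor <;> linarith [hdev.1, hdev.2]

end Dictionary

/-- For a dictionary Φ ∈ ℝ^{n×d} with unit-norm columns and k ≥ 1,
the mutual coherence M, global 2-coherence ν_k and RIC δ_{k+1} satisfy
M ≤ ν_k ≤ δ_{k+1} ≤ √k·ν_k ≤ k·M. -/
theorem mutual_coherence_le_nu_le_ric_le_sqrtk_nu_le_kM
    (n d k : ℕ) (hk : 1 ≤ k)
    (Φ : Matrix (Fin n) (Fin d) ℝ)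
    (hcol : ∀ i : Fin d, ∑ r, Φ r i ^ 2 = 1)
    (M ν δ : ℝ)
    (hM : IsGreatest {x | ∃ i j : Fin d, i ≠ j ∧ x = |∑ r, Φ r i * Φ r j|} M)
    (hν : IsGreatest {x | ∃ (i : Fin d) (Λ : Finset (Fin d)), i ∉ Λ ∧ Λ.card ≤ k ∧
        x = Real.sqrt (∑ j ∈ Λ, (∑ r, Φ r i * Φ r j) ^ 2)} ν)
    (hδ : IsLeast {x | ∀ v : Fin d → ℝ, ({i | v i ≠ 0} : Set (Fin d)).ncard ≤ k + 1 →
        (1 - x) * ∑ i, v i ^ 2 ≤ ∑ r, (∑ i, Φ r i * v i) ^ 2 ∧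
        ∑ r, (∑ i, Φ r i * v i) ^ 2 ≤ (1 + x) * ∑ i, v i ^ 2} δ) :
    M ≤ ν ∧ ν ≤ δ ∧ δ ≤ Real.sqrt k * ν ∧ Real.sqrt k * ν ≤ k * M := by
  obtain ⟨⟨a, b, hab, rfl⟩, hM_max⟩ := hM
  obtain ⟨⟨i, Λ, hiΛ, hΛ, rfl⟩, hν_max⟩ := hν
  have hδ_ric : IsRIPConst Φ (k + 1) δ := hδ.1
  refine ⟨?_, hδ_ric.sqrt_sum_sq_gram_le hiΛ hΛ, hδ.2 ?_, ?_⟩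
  · refine hν_max ⟨a, {b}, by simpa using hab, by simpa using hk, ?_⟩
    rw [sum_singleton, Real.sqrt_sq_eq_abs]
  · exact isRIPConst_sqrt_mul_of_sqrt_sum_sq_gram_le hcol (Real.sqrt_nonneg _)
      fun i Λ hi hΛ => hν_max ⟨i, Λ, hi, hΛ, rfl⟩
  · calc √k * √(∑ j ∈ Λ, (∑ r, Φ r i * Φ r j) ^ 2)
        ≤ √k * (√k * |∑ r, Φ r a * Φ r b|) := by
          gcongr
          refine (sqrt_sum_sq_le_sqrt_card_mul (abs_nonneg _) fun j hj =>
            hM_max ⟨i, j, fun hij => hiΛ (hij ▸ hj), rfl⟩).trans ?_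
          gcongr
      _ = k * |∑ r, Φ r a * Φ r b| := by rw [← mul_assoc, Real.mul_self_sqrt k.cast_nonneg]
end

section
/- For a dictionary Φ with unit-norm columns and any k ≥ 1, the restricted isometry constant satisfies δ_{k+1} ≤ μ_{1,k}, where μ_{1,k} is the cumulative coherence. -/
/-- For a dictionary Φ with unit-norm columns and k ≥ 1,
the RIC satisfies δ_{k+1} ≤ μ_{1,k}. -/
theorem ric_le_cumulative_coherence
    (n d k : ℕ) (hk : 1 ≤ k)
    (Φ : Matrix (Fin n) (Fin d) ℝ)
    (hcol : ∀ i : Fin d, ∑ r, Φ r i ^ 2 = 1)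
    (μ δ : ℝ)
    (hμ : IsGreatest {x | ∃ (i : Fin d) (Λ : Finset (Fin d)), i ∉ Λ ∧ Λ.card ≤ k ∧
        x = ∑ j ∈ Λ, |∑ r, Φ r i * Φ r j|} μ)
    (hδ : IsLeast {x | ∀ v : Fin d → ℝ, ({i | v i ≠ 0} : Set (Fin d)).ncard ≤ k + 1 →
        (1 - x) * ∑ i, v i ^ 2 ≤ ∑ r, (∑ i, Φ r i * v i) ^ 2 ∧
        ∑ r, (∑ i, Φ r i * v i) ^ 2 ≤ (1 + x) * ∑ i, v i ^ 2} δ) :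
    δ ≤ μ := by
  obtain ⟨_, hμub⟩ := hμ
  apply hδ.2
  intro v hv
  classical
  set G : Fin d → Fin d → ℝ := fun i j => ∑ r, Φ r i * Φ r j with hG
  set S : Finset (Fin d) := Finset.univ.filter (fun i => v i ≠ 0) with hSdef
  have hScard : S.card ≤ k + 1 := by
    have h1 : ({i | v i ≠ 0} : Set (Fin d)).ncard = S.card := by
      rw [← Set.ncard_coe_finset]
      congr 1
      ext i
      simp [hSdef]
    omega
  have hvS : ∀ i, i ∉ S → v i = 0 := by
    intro i hi
    by_contra h
    exact hi (by simp [hSdef, h])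
  -- expansion of the quadratic form
  have expand : ∑ r, (∑ i, Φ r i * v i) ^ 2 = ∑ i, ∑ j, v i * v j * G i j := by
    have : ∀ r, (∑ i, Φ r i * v i) ^ 2 = ∑ i, ∑ j, (Φ r i * v i) * (Φ r j * v j) := by
      intro r
      rw [sq, Finset.sum_mul_sum]
    rw [Finset.sum_congr rfl fun r _ => this r, Finset.sum_comm]
    refine Finset.sum_congr rfl fun i _ => ?_
    rw [Finset.sum_comm]
    refine Finset.sum_congr rfl fun j _ => ?_
    rw [hG, Finset.mul_sum]
    exact Finset.sum_congr rfl fun r _ => by ring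
  have diag : ∀ i, G i i = 1 := by
    intro i
    have := hcol i
    simp only [hG]
    rw [← this]
    exact Finset.sum_congr rfl fun r _ => (sq (Φ r i)).symm ▸ (pow_two (Φ r i)).symm
  -- split into diagonal and off-diagonal
  set E : ℝ := ∑ i, ∑ j ∈ Finset.univ.erase i, v i * v j * G i j with hE
  have split : ∑ i, ∑ j, v i * v j * G i j = (∑ i, v i ^ 2) + E := by
    rw [hE, ← Finset.sum_add_distrib]
    refine Finset.sum_congr rfl fun i _ => ?_
    rw [← Finset.add_sum_erase _ _ (Finset.mem_univ i), diag i]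
    ring_nf
  have hTS : ∑ i ∈ S, v i ^ 2 = ∑ i, v i ^ 2 := by
    refine Finset.sum_subset (Finset.subset_univ S) fun i _ hi => ?_
    rw [hvS i hi]; ring
  have hT0 : (0:ℝ) ≤ ∑ i, v i ^ 2 := Finset.sum_nonneg fun i _ => sq_nonneg _
  -- the coherence bound on each row sum
  have hrow : ∀ i ∈ S, ∑ j ∈ S.erase i, |G i j| ≤ μ := by
    intro i hi
    apply hμub
    refine ⟨i, S.erase i, Finset.notMem_erase i S, ?_, rfl⟩
    have := Finset.card_erase_of_mem hi
    omega
  -- swap lemma for sums over distinct pairs in S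
  have swap : ∀ f : Fin d → Fin d → ℝ,
      ∑ i ∈ S, ∑ j ∈ S.erase i, f i j = ∑ j ∈ S, ∑ i ∈ S.erase j, f i j := by
    intro f
    have h1 : ∀ i, ∑ j ∈ S.erase i, f i j = ∑ j ∈ S, if j ≠ i then f i j else 0 := by
      intro i
      rw [← Finset.sum_filter, Finset.filter_ne']
    have h2 : ∀ j, ∑ i ∈ S.erase j, f i j = ∑ i ∈ S, if j ≠ i then f i j else 0 := by
      intro j
      rw [← Finset.sum_filter]
      congr 1
      rw [← Finset.filter_ne']
      exact Finset.filter_congr fun i _ => by simp [ne_comm]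
    simp_rw [h1, h2]
    exact Finset.sum_comm
  -- bound |E| ≤ μ * ∑ v i ^ 2
  have hEbound : |E| ≤ μ * ∑ i, v i ^ 2 := by
    have step1 : |E| ≤ ∑ i, ∑ j ∈ Finset.univ.erase i, |v i| * |v j| * |G i j| := by
      calc |E| ≤ ∑ i, |∑ j ∈ Finset.univ.erase i, v i * v j * G i j| :=
            Finset.abs_sum_le_sum_abs _ _
        _ ≤ ∑ i, ∑ j ∈ Finset.univ.erase i, |v i| * |v j| * |G i j| := by
            refine Finset.sum_le_sum fun i _ => ?_
            calc |∑ j ∈ Finset.univ.erase i, v i * v j * G i j|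
                ≤ ∑ j ∈ Finset.univ.erase i, |v i * v j * G i j| :=
                  Finset.abs_sum_le_sum_abs _ _
              _ = ∑ j ∈ Finset.univ.erase i, |v i| * |v j| * |G i j| := by
                  refine Finset.sum_congr rfl fun j _ => ?_
                  rw [abs_mul, abs_mul]
    have step2 : ∑ i, ∑ j ∈ Finset.univ.erase i, |v i| * |v j| * |G i j|
        = ∑ i ∈ S, ∑ j ∈ S.erase i, |v i| * |v j| * |G i j| := by
      rw [← Finset.sum_subset (Finset.subset_univ S)]
      · refine Finset.sum_congr rfl fun i hi => ?_
        refine (Finset.sum_subset (Finset.erase_subset_erase _ (Finset.subset_univ S))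
          fun j hj hjS => ?_).symm
        have hj' : j ≠ i := Finset.ne_of_mem_erase hj
        have : j ∉ S := fun hjmem => hjS (Finset.mem_erase.mpr ⟨hj', hjmem⟩)
        rw [hvS j this]; simp
      · intro i _ hi
        rw [hvS i hi]
        simp
    have step3 : ∑ i ∈ S, ∑ j ∈ S.erase i, |v i| * |v j| * |G i j|
        ≤ ∑ i ∈ S, ∑ j ∈ S.erase i, ((v i ^ 2 + v j ^ 2) / 2) * |G i j| := by
      refine Finset.sum_le_sum fun i _ => Finset.sum_le_sum fun j _ => ?_
      have h1 : |v i| * |v j| ≤ (v i ^ 2 + v j ^ 2) / 2 := by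
        nlinarith [sq_nonneg (|v i| - |v j|), sq_abs (v i), sq_abs (v j)]
      exact mul_le_mul_of_nonneg_right h1 (abs_nonneg _)
    have step4 : ∑ i ∈ S, ∑ j ∈ S.erase i, ((v i ^ 2 + v j ^ 2) / 2) * |G i j|
        ≤ μ * ∑ i ∈ S, v i ^ 2 := by
      have hdistrib : ∑ i ∈ S, ∑ j ∈ S.erase i, ((v i ^ 2 + v j ^ 2) / 2) * |G i j|
          = (∑ i ∈ S, ∑ j ∈ S.erase i, (v i ^ 2 / 2) * |G i j|)
            + ∑ i ∈ S, ∑ j ∈ S.erase i, (v j ^ 2 / 2) * |G i j| := by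
        rw [← Finset.sum_add_distrib]
        refine Finset.sum_congr rfl fun i _ => ?_
        rw [← Finset.sum_add_distrib]
        exact Finset.sum_congr rfl fun j _ => by ring
      have hsym : ∀ i j : Fin d, |G i j| = |G j i| := by
        intro i j
        simp only [hG]
        congr 1
        exact Finset.sum_congr rfl fun r _ => by ring
      have hsecond : ∑ i ∈ S, ∑ j ∈ S.erase i, (v j ^ 2 / 2) * |G i j|
          = ∑ i ∈ S, ∑ j ∈ S.erase i, (v i ^ 2 / 2) * |G i j| := by
        rw [swap (fun i j => (v j ^ 2 / 2) * |G i j|)]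
        refine Finset.sum_congr rfl fun j _ => Finset.sum_congr rfl fun i _ => ?_
        rw [hsym j i]
      have hfirst : ∑ i ∈ S, ∑ j ∈ S.erase i, (v i ^ 2 / 2) * |G i j|
          ≤ ∑ i ∈ S, (v i ^ 2 / 2) * μ := by
        refine Finset.sum_le_sum fun i hi => ?_
        rw [← Finset.mul_sum]
        exact mul_le_mul_of_nonneg_left (hrow i hi) (by positivity)
      rw [hdistrib, hsecond]
      have : (∑ i ∈ S, (v i ^ 2 / 2) * μ) + ∑ i ∈ S, (v i ^ 2 / 2) * μ
          = μ * ∑ i ∈ S, v i ^ 2 := by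
        rw [← Finset.sum_add_distrib, Finset.mul_sum]
        exact Finset.sum_congr rfl fun i _ => by ring
      linarith [hfirst]
    calc |E| ≤ ∑ i, ∑ j ∈ Finset.univ.erase i, |v i| * |v j| * |G i j| := step1
      _ = ∑ i ∈ S, ∑ j ∈ S.erase i, |v i| * |v j| * |G i j| := step2
      _ ≤ ∑ i ∈ S, ∑ j ∈ S.erase i, ((v i ^ 2 + v j ^ 2) / 2) * |G i j| := step3
      _ ≤ μ * ∑ i ∈ S, v i ^ 2 := step4
      _ = μ * ∑ i, v i ^ 2 := by rw [hTS]
  have hN : ∑ r, (∑ i, Φ r i * v i) ^ 2 = (∑ i, v i ^ 2) + E := by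
    rw [expand, split]
  obtain ⟨hE1, hE2⟩ := abs_le.mp hEbound
  constructor
  · rw [hN]; linarith
  · rw [hN]; linarith
end

section
/- Let a ∈ ℝ^d have support Λ with |Λ| = k, and suppose ⟨Φa, φ_i⟩ = 0 for all i ∈ Λ \ Ω where Ω ⊆ Λ has |Ω| = m. Then max_{i ∈ Λ} |⟨Φa, φ_i⟩| ≥ (√(1−δ_k)/√m) · ‖Φa‖_2, where δ_k is the restricted isometry constant of Φ of order k. -/
/-- If a is supported on Λ with |Λ| = k and ⟨Φa, φ_i⟩ = 0 for
i ∈ Λ \ Ω with Ω ⊆ Λ, |Ω| = m ≥ 1, then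
max_{i∈Λ} |⟨Φa, φ_i⟩| ≥ (√(1−δ_k)/√m)·‖Φa‖₂. -/
theorem max_inner_on_support_ge
    (n d k m : ℕ) (hm : 1 ≤ m)
    (Φ : Matrix (Fin n) (Fin d) ℝ)
    (hcol : ∀ i : Fin d, ∑ r, Φ r i ^ 2 = 1)
    (δ : ℝ) (hδ1 : δ < 1)
    (hδ : ∀ v : Fin d → ℝ, ({i | v i ≠ 0} : Set (Fin d)).ncard ≤ k →
        (1 - δ) * ∑ i, v i ^ 2 ≤ ∑ r, (Φ.mulVec v r) ^ 2 ∧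
        ∑ r, (Φ.mulVec v r) ^ 2 ≤ (1 + δ) * ∑ i, v i ^ 2)
    (a : Fin d → ℝ) (Λ Ω : Finset (Fin d))
    (hsupp : ∀ i, a i ≠ 0 ↔ i ∈ Λ) (hΛ : Λ.card = k)
    (hΩΛ : Ω ⊆ Λ) (hΩ : Ω.card = m)
    (horth : ∀ i ∈ Λ \ Ω, ∑ r, Φ.mulVec a r * Φ r i = 0) :
    ∃ i ∈ Λ, Real.sqrt (1 - δ) / Real.sqrt m * Real.sqrt (∑ r, (Φ.mulVec a r) ^ 2)
      ≤ |∑ r, Φ.mulVec a r * Φ r i| := by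
  classical
  set Fa := Φ.mulVec a with hFa
  set c : Fin d → ℝ := fun i => ∑ r, Fa r * Φ r i with hc
  have hΩne : Ω.Nonempty := Finset.card_pos.mp (by omega)
  obtain ⟨i₀, hi₀Ω, hmax⟩ := Ω.exists_max_image (fun i => |c i|) hΩne
  refine ⟨i₀, hΩΛ hi₀Ω, ?_⟩
  set M := |c i₀| with hM
  have hMnn : 0 ≤ M := abs_nonneg _
  set S := ∑ r, Fa r ^ 2 with hS
  have hSnn : 0 ≤ S := Finset.sum_nonneg fun r _ => sq_nonneg _
  set A := ∑ i, a i ^ 2 with hA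
  have hAnn : 0 ≤ A := Finset.sum_nonneg fun i _ => sq_nonneg _
  -- key identity : S = ∑ i in Ω, a i * c i
  have hswap : S = ∑ i, a i * c i := by
    calc S = ∑ r, Fa r * ∑ i, Φ r i * a i := by
            refine Finset.sum_congr rfl fun r _ => ?_
            rw [show (∑ i, Φ r i * a i) = Fa r from rfl]; ring
      _ = ∑ i, a i * c i := by
            simp_rw [Finset.mul_sum, hc, Finset.mul_sum]
            rw [Finset.sum_comm]
            exact Finset.sum_congr rfl fun i _ => Finset.sum_congr rfl fun r _ => by ring
  have hident : S = ∑ i ∈ Ω, a i * c i := by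
    rw [hswap, ← Finset.sum_subset (Finset.subset_univ Λ)
      (fun i _ hiΛ => by
        have : a i = 0 := by by_contra h; exact hiΛ ((hsupp i).mp h)
        simp [this]),
      ← Finset.sum_sdiff hΩΛ]
    have h0 : ∑ i ∈ Λ \ Ω, a i * c i = 0 :=
      Finset.sum_eq_zero fun i hi => by
        have := horth i hi
        simp only [hc]
        rw [show (∑ r, Fa r * Φ r i) = ∑ r, Φ.mulVec a r * Φ r i from rfl, this, mul_zero]
    rw [h0, zero_add]
  have hbound : S ≤ M * ∑ i ∈ Ω, |a i| := by
    rw [hident, Finset.mul_sum]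
    refine Finset.sum_le_sum fun i hi => ?_
    calc a i * c i ≤ |a i * c i| := le_abs_self _
      _ = |a i| * |c i| := abs_mul _ _
      _ ≤ |a i| * M := mul_le_mul_of_nonneg_left (hmax i hi) (abs_nonneg _)
      _ = M * |a i| := mul_comm _ _
  have hCS : (∑ i ∈ Ω, |a i|) ^ 2 ≤ (m : ℝ) * A := by
    have := Finset.sum_mul_sq_le_sq_mul_sq Ω (fun _ => (1 : ℝ)) (fun i => |a i|)
    simp only [one_mul, one_pow] at this
    calc (∑ i ∈ Ω, |a i|) ^ 2 ≤ (∑ _i ∈ Ω, (1:ℝ)) * ∑ i ∈ Ω, |a i| ^ 2 := this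
      _ = (m : ℝ) * ∑ i ∈ Ω, |a i| ^ 2 := by rw [Finset.sum_const, hΩ]; push_cast; ring
      _ ≤ (m : ℝ) * A := by
          refine mul_le_mul_of_nonneg_left ?_ (by positivity)
          rw [hA]
          refine Finset.sum_le_sum_of_subset_of_nonneg (Finset.subset_univ Ω)
            (fun i _ _ => sq_nonneg _) |>.trans_eq' ?_
          exact Finset.sum_congr rfl fun i _ => by rw [sq_abs]
  have hk : ({i | a i ≠ 0} : Set (Fin d)).ncard ≤ k := by
    have : ({i | a i ≠ 0} : Set (Fin d)) = ↑Λ := by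
      ext i; simp [hsupp i]
    rw [this, Set.ncard_coe_finset, hΛ]
  have hRIP : (1 - δ) * A ≤ S := (hδ a hk).1
  -- sqrt bookkeeping
  set α := Real.sqrt (1 - δ) with hα
  set β := Real.sqrt m with hβ
  set s := Real.sqrt S with hs
  set t := Real.sqrt A with ht
  have h1δ : (0:ℝ) < 1 - δ := by linarith
  have hαpos : 0 < α := Real.sqrt_pos.mpr h1δ
  have hβpos : 0 < β := Real.sqrt_pos.mpr (by exact_mod_cast Nat.pos_of_ne_zero (by omega))
  have hsnn : 0 ≤ s := Real.sqrt_nonneg _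
  have htnn : 0 ≤ t := Real.sqrt_nonneg _
  have hs2 : s ^ 2 = S := Real.sq_sqrt hSnn
  have hsum : ∑ i ∈ Ω, |a i| ≤ β * t := by
    rw [hβ, ht, ← Real.sqrt_mul (by positivity)]
    exact (Real.le_sqrt (Finset.sum_nonneg fun i _ => abs_nonneg _)
      (by positivity)).mpr hCS
  have hαt : α * t ≤ s := by
    rw [hα, ht, hs, ← Real.sqrt_mul (le_of_lt h1δ)]
    exact Real.sqrt_le_sqrt hRIP
  have hSM : S ≤ M * (β * t) :=
    hbound.trans (mul_le_mul_of_nonneg_left hsum hMnn)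
  rw [div_mul_eq_mul_div, div_le_iff₀ hβpos]
  rcases eq_or_lt_of_le hsnn with h0 | hspos
  · rw [← h0, mul_zero]; positivity
  · have key : α * s * s ≤ M * β * s := by
      calc α * s * s = α * S := by rw [← hs2]; ring
        _ ≤ α * (M * (β * t)) := mul_le_mul_of_nonneg_left hSM (le_of_lt hαpos)
        _ = M * β * (α * t) := by ring
        _ ≤ M * β * s := mul_le_mul_of_nonneg_left hαt (by positivity)
    exact le_of_mul_le_mul_right key hspos
end

section
/- Let f = Φa + w with supp(a) = Λ, |Λ| = k, ‖w‖_2 ≤ ε, and δ_k < 1. Then max_{i ∈ Λ} |⟨f, φ_i⟩| ≥ (√(1−δ_k)/√k) · ‖Φa‖_2 − ε. -/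
/-- If f = Φa + w with supp(a) = Λ, |Λ| = k ≥ 1, ‖w‖₂ ≤ ε and δ_k < 1,
then max_{i∈Λ} |⟨f, φ_i⟩| ≥ (√(1−δ_k)/√k)·‖Φa‖₂ − ε. -/
theorem max_inner_f_on_support_ge
    (n d k : ℕ) (hk : 1 ≤ k)
    (Φ : Matrix (Fin n) (Fin d) ℝ)
    (hcol : ∀ i : Fin d, ∑ r, Φ r i ^ 2 = 1)
    (δ : ℝ) (hδ1 : δ < 1)
    (hδ : ∀ v : Fin d → ℝ, ({i | v i ≠ 0} : Set (Fin d)).ncard ≤ k →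
        (1 - δ) * ∑ i, v i ^ 2 ≤ ∑ r, (Φ.mulVec v r) ^ 2 ∧
        ∑ r, (Φ.mulVec v r) ^ 2 ≤ (1 + δ) * ∑ i, v i ^ 2)
    (a : Fin d → ℝ) (Λ : Finset (Fin d))
    (hsupp : ∀ i, a i ≠ 0 ↔ i ∈ Λ) (hΛ : Λ.card = k)
    (w : Fin n → ℝ) (ε : ℝ) (hw : Real.sqrt (∑ r, w r ^ 2) ≤ ε) :
    ∃ i ∈ Λ, Real.sqrt (1 - δ) / Real.sqrt k * Real.sqrt (∑ r, (Φ.mulVec a r) ^ 2) - ε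
      ≤ |∑ r, (Φ.mulVec a r + w r) * Φ r i| := by
  set x := Φ.mulVec a with hx
  have hΛne : Λ.Nonempty := Finset.card_pos.mp (by omega)
  obtain ⟨i₀, hi₀, hmax⟩ := Λ.exists_max_image (fun i => |∑ r, x r * Φ r i|) hΛne
  refine ⟨i₀, hi₀, ?_⟩
  set M := |∑ r, x r * Φ r i₀| with hM
  have hM0 : 0 ≤ M := abs_nonneg _
  have hε0 : 0 ≤ ε := le_trans (Real.sqrt_nonneg _) hw
  -- support
  have hsupset : ({i | a i ≠ 0} : Set (Fin d)) = ↑Λ := by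
    ext i; simp [hsupp i]
  have hrip := (hδ a (by rw [hsupset]; simp [hΛ])).1
  have hzero : ∀ i ∈ Finset.univ, i ∉ Λ → a i = 0 := by
    intro i _ hi
    by_contra h; exact hi ((hsupp i).mp h)
  have h1 : ∀ r, x r = ∑ i ∈ Λ, Φ r i * a i := by
    intro r
    rw [hx]
    show ∑ i, Φ r i * a i = _
    rw [← Finset.sum_subset (Finset.subset_univ Λ)
      (fun i h hi => by rw [hzero i h hi, mul_zero])]
  -- identity ‖x‖² = ∑_{i∈Λ} a i ⟨x, φ_i⟩
  have hid : ∑ r, x r ^ 2 = ∑ i ∈ Λ, a i * ∑ r, x r * Φ r i := by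
    calc ∑ r, x r ^ 2 = ∑ r, ∑ i ∈ Λ, x r * (Φ r i * a i) := by
          refine Finset.sum_congr rfl fun r _ => ?_
          rw [← Finset.mul_sum, ← h1 r]; ring
      _ = ∑ i ∈ Λ, ∑ r, x r * (Φ r i * a i) := Finset.sum_comm
      _ = ∑ i ∈ Λ, a i * ∑ r, x r * Φ r i := by
          refine Finset.sum_congr rfl fun i _ => ?_
          rw [Finset.mul_sum]
          exact Finset.sum_congr rfl fun r _ => by ring
  -- bound: S ≤ (∑_{Λ} |a i|) * M
  have hS1 : ∑ r, x r ^ 2 ≤ (∑ i ∈ Λ, |a i|) * M := by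
    rw [hid, Finset.sum_mul]
    calc ∑ i ∈ Λ, a i * ∑ r, x r * Φ r i
        ≤ ∑ i ∈ Λ, |a i * ∑ r, x r * Φ r i| :=
          Finset.sum_le_sum fun i _ => le_abs_self _
      _ ≤ ∑ i ∈ Λ, |a i| * M := by
          refine Finset.sum_le_sum fun i hi => ?_
          rw [abs_mul]
          exact mul_le_mul_of_nonneg_left (hmax i hi) (abs_nonneg _)
  -- Cauchy–Schwarz: ∑_{Λ} |a i| ≤ √(∑ a²) * √k
  have hA : ∑ i ∈ Λ, (a i) ^ 2 = ∑ i, (a i) ^ 2 :=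
    Finset.sum_subset (Finset.subset_univ Λ)
      (fun i h hi => by rw [hzero i h hi]; ring)
  have hCS : ∑ i ∈ Λ, |a i| ≤ Real.sqrt (∑ i, a i ^ 2) * Real.sqrt k := by
    have h2 := Finset.sum_mul_sq_le_sq_mul_sq Λ (fun i => |a i|) (fun _ => (1:ℝ))
    simp only [mul_one, sq_abs, one_pow, Finset.sum_const, hΛ, nsmul_eq_mul] at h2
    rw [hA] at h2
    calc ∑ i ∈ Λ, |a i| = Real.sqrt ((∑ i ∈ Λ, |a i|) ^ 2) :=
          (Real.sqrt_sq (Finset.sum_nonneg fun i _ => abs_nonneg _)).symm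
      _ ≤ Real.sqrt ((∑ i, a i ^ 2) * k) := Real.sqrt_le_sqrt h2
      _ = Real.sqrt (∑ i, a i ^ 2) * Real.sqrt k :=
          Real.sqrt_mul (Finset.sum_nonneg fun i _ => sq_nonneg _) _
  -- abbreviations
  set S := ∑ r, x r ^ 2 with hSdef
  set A2 := ∑ i, a i ^ 2 with hA2
  have hS0 : 0 ≤ S := Finset.sum_nonneg fun r _ => sq_nonneg _
  have hA20 : 0 ≤ A2 := Finset.sum_nonneg fun i _ => sq_nonneg _
  have hs : Real.sqrt S ^ 2 = S := Real.sq_sqrt hS0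
  have hb : Real.sqrt A2 ^ 2 = A2 := Real.sq_sqrt hA20
  have ht : Real.sqrt (1 - δ) ^ 2 = 1 - δ := Real.sq_sqrt (by linarith)
  have hu : Real.sqrt (k:ℝ) ^ 2 = (k:ℝ) := Real.sq_sqrt (Nat.cast_nonneg k)
  have hu0 : 0 < Real.sqrt (k:ℝ) := Real.sqrt_pos.mpr (by exact_mod_cast Nat.pos_of_ne_zero (by omega))
  -- S ≤ √A2 * √k * M
  have hS2 : S ≤ Real.sqrt A2 * Real.sqrt k * M :=
    le_trans hS1 (mul_le_mul_of_nonneg_right hCS hM0)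
  -- RIP in sqrt form: √(1-δ) * √A2 ≤ √S
  have hrip' : Real.sqrt (1 - δ) * Real.sqrt A2 ≤ Real.sqrt S := by
    rw [← Real.sqrt_mul (by linarith : (0:ℝ) ≤ 1 - δ)]
    exact Real.sqrt_le_sqrt hrip
  -- key: √(1-δ) * √S ≤ √k * M
  have hkey : Real.sqrt (1 - δ) * Real.sqrt S ≤ Real.sqrt k * M := by
    rcases eq_or_lt_of_le (Real.sqrt_nonneg S) with h | h
    · rw [← h, mul_zero]
      exact mul_nonneg hu0.le hM0
    · have h2 : Real.sqrt (1 - δ) * S ≤ Real.sqrt S * (Real.sqrt k * M) := by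
        calc Real.sqrt (1 - δ) * S
            ≤ Real.sqrt (1 - δ) * (Real.sqrt A2 * Real.sqrt k * M) :=
              mul_le_mul_of_nonneg_left hS2 (Real.sqrt_nonneg _)
          _ = (Real.sqrt (1 - δ) * Real.sqrt A2) * (Real.sqrt k * M) := by ring
          _ ≤ Real.sqrt S * (Real.sqrt k * M) :=
              mul_le_mul_of_nonneg_right hrip' (mul_nonneg hu0.le hM0)
      have : Real.sqrt (1 - δ) * (Real.sqrt S * Real.sqrt S) ≤ Real.sqrt S * (Real.sqrt k * M) := by
        rw [← sq, hs]; exact h2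
      nlinarith [h]
  have hkey' : Real.sqrt (1 - δ) / Real.sqrt k * Real.sqrt S ≤ M := by
    rw [div_mul_eq_mul_div, div_le_iff₀ hu0]
    linarith [hkey]
  -- noise bound: |⟨w, φ_{i₀}⟩| ≤ ε
  have hwb : |∑ r, w r * Φ r i₀| ≤ ε := by
    have h2 := Finset.sum_mul_sq_le_sq_mul_sq Finset.univ w (fun r => Φ r i₀)
    rw [hcol i₀, mul_one] at h2
    calc |∑ r, w r * Φ r i₀| = Real.sqrt ((∑ r, w r * Φ r i₀) ^ 2) :=
          (Real.sqrt_sq_eq_abs _).symm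
      _ ≤ Real.sqrt (∑ r, w r ^ 2) := Real.sqrt_le_sqrt h2
      _ ≤ ε := hw
  -- combine
  have hsplit : ∑ r, (x r + w r) * Φ r i₀
      = (∑ r, x r * Φ r i₀) + ∑ r, w r * Φ r i₀ := by
    rw [← Finset.sum_add_distrib]
    exact Finset.sum_congr rfl fun r _ => by ring
  have habs : M ≤ |∑ r, (x r + w r) * Φ r i₀| + |∑ r, w r * Φ r i₀| := by
    rw [hM]
    calc |∑ r, x r * Φ r i₀|
        = |(∑ r, (x r + w r) * Φ r i₀) + -(∑ r, w r * Φ r i₀)| := by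
          rw [hsplit]; ring_nf
      _ ≤ |∑ r, (x r + w r) * Φ r i₀| + |-(∑ r, w r * Φ r i₀)| := abs_add_le _ _
      _ = _ := by rw [abs_neg]
  linarith
end

section
/- Let r_m be a residual in ℝ^n orthogonal to the current approximation G_m (with f = G_m + r_m), suppose |⟨r_m, φ⟩| < t‖r_m‖ for all atoms φ ∈ Φ, and let f^ε satisfy ‖f − f^ε‖ ≤ ε and f^ε/C ∈ A_1(Φ) for some C > 0. Then ‖r_m‖ ≤ ε + tC. -/
/-!
Since `r ⟂ G`, `‖r‖² = ⟪r, f⟫ = ⟪r, f - fε⟫ + ⟪r, fε⟫`. The first term is at most `‖r‖ ε` by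
Cauchy–Schwarz. For the second, the half-space `{x | ⟪r, x⟫ ≤ t ‖r‖}` is closed, convex and
contains `±D`, hence contains `C⁻¹ • fε`, so `⟪r, fε⟫ ≤ t C ‖r‖`. Dividing by `‖r‖` (positive,
because the threshold condition is strict and `D` is nonempty) gives the bound.
-/

section ConvexHull

variable {E : Type*} [AddCommGroup E] [Module ℝ E] [TopologicalSpace E]

theorem ContinuousLinearMap.le_of_mem_closure_convexHull (ℓ : E →L[ℝ] ℝ) {s : Set E} {b : ℝ}
    (h : ∀ y ∈ s, ℓ y ≤ b) {x : E} (hx : x ∈ closure (convexHull ℝ s)) : ℓ x ≤ b :=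
  closure_minimal (convexHull_min h (convex_halfSpace_le ℓ.isLinear b))
    (isClosed_le ℓ.continuous continuous_const) hx

theorem ContinuousLinearMap.abs_le_of_mem_closure_convexHull_union_neg (ℓ : E →L[ℝ] ℝ)
    {s : Set E} {b : ℝ} (h : ∀ y ∈ s, |ℓ y| ≤ b) {x : E}
    (hx : x ∈ closure (convexHull ℝ (s ∪ -s))) : |ℓ x| ≤ b := by
  have hsymm : ∀ y ∈ s ∪ -s, |ℓ y| ≤ b := by
    rintro y (hy | hy)
    · exact h y hy
    · simpa using h (-y) hy
  rw [abs_le, neg_le]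
  exact ⟨(-ℓ).le_of_mem_closure_convexHull (fun y hy => (neg_le_abs _).trans (hsymm y hy)) hx,
    ℓ.le_of_mem_closure_convexHull (fun y hy => (le_abs_self _).trans (hsymm y hy)) hx⟩

end ConvexHull

theorem norm_sq_le_of_inner_eq_zero {E : Type*} [NormedAddCommGroup E] [InnerProductSpace ℝ E]
    {f g r : E} (hdecomp : f = g + r) (horth : (inner ℝ r g : ℝ) = 0) (y : E) :
    ‖r‖ ^ 2 ≤ ‖r‖ * ‖f - y‖ + inner ℝ r y := by
  have hrf : (inner ℝ r f : ℝ) = ‖r‖ ^ 2 := by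
    rw [hdecomp, inner_add_right, horth, real_inner_self_eq_norm_sq, zero_add]
  calc ‖r‖ ^ 2 = inner ℝ r (f - y) + inner ℝ r y := by rw [← inner_add_right, sub_add_cancel, hrf]
    _ ≤ ‖r‖ * ‖f - y‖ + inner ℝ r y := by gcongr; exact real_inner_le_norm _ _

theorem residual_bound_at_termination_general
    {E : Type*} [NormedAddCommGroup E] [InnerProductSpace ℝ E]
    (D : Set E)
    (f Gm rm fε : E) (t ε C : ℝ)
    (hC : 0 < C)
    (hdecomp : f = Gm + rm) (horth : (inner ℝ rm Gm : ℝ) = 0)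
    (hthresh : ∀ φ ∈ D, |(inner ℝ rm φ : ℝ)| < t * ‖rm‖)
    (happrox : ‖f - fε‖ ≤ ε)
    (hA1 : C⁻¹ • fε ∈ closure (convexHull ℝ (D ∪ (-D)))) :
    ‖rm‖ ≤ ε + t * C := by
  obtain ⟨φ, hφ⟩ : D.Nonempty := by
    simpa [convexHull_nonempty_iff] using closure_nonempty_iff.mp ⟨_, hA1⟩
  have hrm : 0 < ‖rm‖ := by
    have hpos : 0 < t * ‖rm‖ := (abs_nonneg _).trans_lt (hthresh φ hφ)
    refine (norm_nonneg rm).lt_of_ne fun h => ?_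
    simp [← h] at hpos
  have hfε : (inner ℝ rm fε : ℝ) ≤ C * (t * ‖rm‖) := by
    have := (innerSL ℝ rm).abs_le_of_mem_closure_convexHull_union_neg
      (fun φ hφ => (hthresh φ hφ).le) hA1
    rw [innerSL_apply_apply, real_inner_smul_right] at this
    exact (inv_mul_le_iff₀ hC).mp ((le_abs_self _).trans this)
  have hsq := norm_sq_le_of_inner_eq_zero hdecomp horth fε
  refine le_of_mul_le_mul_left ?_ hrm
  linarith [mul_le_mul_of_nonneg_left happrox hrm.le]

/-- If r_m = f − G_m is orthogonal to G_m, every atom φ ∈ D has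
|⟨r_m, φ⟩| < t‖r_m‖, and f^ε satisfies ‖f − f^ε‖ ≤ ε with f^ε/C in the closure
of the convex hull of ±D, then ‖r_m‖ ≤ ε + tC. -/
theorem residual_bound_at_termination
    {E : Type*} [NormedAddCommGroup E] [InnerProductSpace ℝ E]
    (D : Set E) (hD : ∀ φ ∈ D, ‖φ‖ = 1)
    (f Gm rm fε : E) (t ε C : ℝ)
    (ht : 0 < t) (hε : 0 ≤ ε) (hC : 0 < C)
    (hdecomp : f = Gm + rm) (horth : (inner ℝ rm Gm : ℝ) = 0)
    (hthresh : ∀ φ ∈ D, |(inner ℝ rm φ : ℝ)| < t * ‖rm‖)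
    (happrox : ‖f - fε‖ ≤ ε)
    (hA1 : C⁻¹ • fε ∈ closure (convexHull ℝ (D ∪ (-D)))) :
    ‖rm‖ ≤ ε + t * C :=
  residual_bound_at_termination_general D f Gm rm fε t ε C hC hdecomp horth hthresh happrox hA1
end

section
/- If δ_k + √k·ν_k < 1 and ε < √(1−δ_k)(1 − δ_k − √k ν_k)|a_min| / ((√k+1)√(1−δ_k) + (1−δ_k) + ν_k), then the interval ((ν_k|a_min|+ε)/(√(1−δ_k)|a_min|−ε), ((1−δ_k)|a_min|−ε)/(√(k(1−δ_k))|a_min|+ε)] is nonempty; i.e., a valid threshold t exists. -/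
/-- If δ_k + √k·ν_k < 1 and the noise level ε satisfies
ε < √(1−δ)(1 − δ − √k ν)|a_min| / ((√k+1)√(1−δ) + (1−δ) + ν), then the interval
of valid thresholds is nonempty: the lower endpoint is strictly below the upper
endpoint and both denominators are positive. -/
theorem threshold_interval_nonempty
    (k : ℕ) (hk : 1 ≤ k)
    (δ ν amin ε : ℝ)
    (hδ0 : 0 ≤ δ) (hδ1 : δ < 1) (hν : 0 ≤ ν)
    (hamin : 0 < amin) (hε : 0 ≤ ε)
    (h1 : δ + Real.sqrt k * ν < 1)
    (h2 : ε < Real.sqrt (1 - δ) * (1 - δ - Real.sqrt k * ν) * amin /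
        ((Real.sqrt k + 1) * Real.sqrt (1 - δ) + (1 - δ) + ν)) :
    0 < Real.sqrt (1 - δ) * amin - ε ∧
    0 < Real.sqrt (k * (1 - δ)) * amin + ε ∧
    (ν * amin + ε) / (Real.sqrt (1 - δ) * amin - ε) <
      ((1 - δ) * amin - ε) / (Real.sqrt (k * (1 - δ)) * amin + ε) := by
  set s := Real.sqrt (1 - δ) with hsdef
  set r := Real.sqrt k with hrdef
  have hδ1' : (0:ℝ) < 1 - δ := by linarith
  have hs0 : 0 < s := Real.sqrt_pos.mpr hδ1'
  have hs2 : s ^ 2 = 1 - δ := Real.sq_sqrt (le_of_lt hδ1')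
  have hr1 : 1 ≤ r := by
    rw [hrdef]
    rw [show (1:ℝ) = Real.sqrt 1 from (Real.sqrt_one).symm]
    exact Real.sqrt_le_sqrt (by exact_mod_cast hk)
  have hrs : Real.sqrt (k * (1 - δ)) = r * s := Real.sqrt_mul (by positivity) _
  have hD : 0 < (r + 1) * s + (1 - δ) + ν := by positivity
  have hε2 : ε * ((r + 1) * s + (1 - δ) + ν) < s * (1 - δ - r * ν) * amin :=
    (lt_div_iff₀ hD).mp h2
  have hA : 0 < s * amin - ε := by
    nlinarith [mul_nonneg hε (mul_nonneg (by positivity : (0:ℝ) ≤ r + 1) hs0.le),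
      mul_nonneg hε hν,
      mul_nonneg (mul_nonneg (mul_nonneg hs0.le (by linarith : (0:ℝ) ≤ r)) hν) hamin.le,
      mul_pos (mul_pos hs0 hs0) hamin, mul_pos hs0 hamin, hs2]
  refine ⟨hA, ?_, ?_⟩
  · rw [hrs]; positivity
  · rw [hrs, div_lt_div_iff₀ hA (by positivity)]
    nlinarith [mul_pos hs0 hamin, mul_nonneg hε (le_of_lt hamin), sq_nonneg ε]
end
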